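/- arXiv:1310.3448 — 2 statements merged into one kernel-verified Lean document; each statement's English description precedes it below -/
import Mathlib

section
/- Let R be a Cohen-Macaulay Noetherian ring with exactly one minimal prime ideal p. If the localization R_p is reduced, then R is reduced. -/
/-!
Every associated prime `q` of a Cohen-Macaulay ring is minimal: `qR_q` is then an associated
prime of `R_q`, so every element of the maximal ideal of `R_q` is a zero divisor and
`dim R_q = depth R_q = 0`. With `p` the only minimal prime, every zero divisor lies in `p`, so
`R → R_p` is injective and `R` embeds into the reduced ring `R_p`.
-/

/-- The depth of a local ring: the supremum of the lengths of regular sequences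
consisting of elements of the maximal ideal. -/
noncomputable def localRingDepth (R : Type*) [CommRing R] [IsLocalRing R] : ℕ∞ :=
  sSup {n : ℕ∞ | ∃ rs : List R, (rs.length : ℕ∞) = n ∧
    RingTheory.Sequence.IsRegular R rs ∧ ∀ x ∈ rs, x ∈ IsLocalRing.maximalIdeal R}

/-- A commutative ring is Cohen-Macaulay if for every prime ideal `p` the depth of
the localization `R_p` equals its Krull dimension. -/
def IsCohenMacaulayRing (R : Type*) [CommRing R] : Prop :=
  ∀ p : Ideal R, (hp : p.IsPrime) →
    haveI := hp
    (localRingDepth (Localization.AtPrime p) : WithBot ℕ∞) =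
      ringKrullDim (Localization.AtPrime p)

open IsLocalRing

lemma localRingDepth_eq_zero_of_maximalIdeal_mem_associatedPrimes {A : Type*} [CommRing A]
    [IsNoetherianRing A] [IsLocalRing A] (h : maximalIdeal A ∈ associatedPrimes A A) :
    localRingDepth A = 0 := by
  have hzd : ∀ r ∈ maximalIdeal A, ¬IsSMulRegular A r := fun r hr hreg => by
    have : r ∈ ⋃ q ∈ associatedPrimes A A, (q : Set A) := Set.mem_biUnion h hr
    rw [biUnion_associatedPrimes_eq_zero_divisors] at this
    obtain ⟨x, hx, hrx⟩ := this
    exact hx (hreg.right_eq_zero_of_smul hrx)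
  refine le_antisymm (sSup_le ?_) bot_le
  rintro _ ⟨_ | ⟨r, rs⟩, rfl, hreg, hmem⟩
  · simp
  · exact absurd ((RingTheory.Sequence.isRegular_cons_iff A r rs).mp hreg).1
      (hzd r (hmem r List.mem_cons_self))

theorem IsCohenMacaulayRing.mem_minimalPrimes_of_mem_associatedPrimes {R : Type*} [CommRing R]
    [IsNoetherianRing R] (hCM : IsCohenMacaulayRing R) {q : Ideal R}
    (hq : q ∈ associatedPrimes R R) : q ∈ minimalPrimes R := by
  have := hq.isPrime
  have hmax : maximalIdeal (Localization.AtPrime q) ∈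
      associatedPrimes (Localization.AtPrime q) (Localization.AtPrime q) :=
    Module.associatedPrimes.mem_associatedPrimes_of_comap_mem_associatedPrimes_of_isLocalizedModule
      q.primeCompl (Algebra.linearMap R _) _
      (by simpa [Localization.AtPrime.under_maximalIdeal] using hq)
  have hdim := hCM q this
  rw [localRingDepth_eq_zero_of_maximalIdeal_mem_associatedPrimes hmax,
    IsLocalization.AtPrime.ringKrullDim_eq_height q] at hdim
  exact Ideal.height_eq_zero_iff.mp (by exact_mod_cast hdim.symm)

theorem Ideal.primeCompl_le_nonZeroDivisors_of_forall_associatedPrimes_le {R : Type*}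
    [CommRing R] [IsNoetherianRing R] {p : Ideal R} [p.IsPrime]
    (h : ∀ q ∈ associatedPrimes R R, q ≤ p) : p.primeCompl ≤ nonZeroDivisors R := by
  intro s hs
  by_contra hzd
  rw [← SetLike.mem_coe, ← Set.mem_compl_iff,
    ← biUnion_associatedPrimes_eq_compl_nonZeroDivisors] at hzd
  obtain ⟨q, hq, hsq⟩ := Set.mem_iUnion₂.mp hzd
  exact hs (h q hq hsq)

/-- A Cohen-Macaulay Noetherian ring with a unique minimal prime `p` such that the
localization `R_p` is reduced is itself reduced. -/
theorem stmt0 {R : Type*} [CommRing R] [IsNoetherianRing R]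
    (hCM : IsCohenMacaulayRing R)
    (p : Ideal R) [p.IsPrime]
    (huniq : minimalPrimes R = {p})
    (hred : IsReduced (Localization.AtPrime p)) :
    IsReduced R := by
  have hass : ∀ q ∈ associatedPrimes R R, q ≤ p := fun q hq => by
    have := hCM.mem_minimalPrimes_of_mem_associatedPrimes hq
    rw [huniq, Set.mem_singleton_iff] at this
    exact this.le
  exact isReduced_of_injective (algebraMap R (Localization.AtPrime p)) <|
    IsLocalization.injective _ (p.primeCompl_le_nonZeroDivisors_of_forall_associatedPrimes_le hass)
end

section
/- Let Δ ⊆ F ⊆ P^N with Δ a complete intersection of dimension ≥ 1 in P^N and O_F(Δ) ≅ O_F(d₁). Then the restriction map H^0(P^N, O_{P^N}(m)) → H^0(F, O_F(m)) is surjective for every m ≥ 0. -/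
/-!
STATEMENT 12: Let `Δ ⊆ F ⊆ ℙ^N` with `Δ` a complete intersection of dimension
`≥ 1` in `ℙ^N` and `O_F(Δ) ≅ O_F(d₁)`.  Then the restriction map
`H⁰(ℙ^N, O(m)) → H⁰(F, O_F(m))` is surjective for every `m ≥ 0`.

Formalization via the induction of the paper: for every `m ∈ ℤ`,
`A m = H⁰(ℙ^N, O(m))`, `B m = H⁰(F, O_F(m))`, `C m = H⁰(Δ, O_Δ(m))` with
* `q m : A (m − d₁) → A m` multiplication by an equation `Q` of degree `d₁`;
* `ι m : B (m − d₁) → B m` coming from `0 → O_F(m−d₁) → O_F(m) → O_Δ(m) → 0`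
  (so `ker ρ ⊆ range ι`), `ρ m : B m → C m` restriction to `Δ`;
* `s m : A m → B m` and `σ m : A m → C m` the restriction maps, compatible with
  the above;
* `σ m` surjective for all `m` (projective normality of the complete
  intersection `Δ` of dimension ≥ 1);
* `B m = 0` for `m < 0`.
Then `s m` is surjective for every `m ≥ 0`.
-/

theorem stmt12 (d1 : ℤ) (hd1 : 1 ≤ d1)
    (A B C : ℤ → Type*)
    [∀ m, AddCommGroup (A m)] [∀ m, AddCommGroup (B m)] [∀ m, AddCommGroup (C m)]
    [∀ m, Module ℂ (A m)] [∀ m, Module ℂ (B m)] [∀ m, Module ℂ (C m)]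
    (q : ∀ m : ℤ, A (m - d1) →ₗ[ℂ] A m)      -- multiplication by Q on ℙ^N
    (ι : ∀ m : ℤ, B (m - d1) →ₗ[ℂ] B m)      -- multiplication by Q̄ on F
    (ρ : ∀ m : ℤ, B m →ₗ[ℂ] C m)             -- restriction F → Δ
    (s : ∀ m : ℤ, A m →ₗ[ℂ] B m)             -- restriction ℙ^N → F
    (σ : ∀ m : ℤ, A m →ₗ[ℂ] C m)             -- restriction ℙ^N → Δ
    (hneg : ∀ m : ℤ, m < 0 → Subsingleton (B m))
    (hexact : ∀ m : ℤ, LinearMap.ker (ρ m) ≤ LinearMap.range (ι m))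
    (hcomm : ∀ m : ℤ, (ρ m).comp (s m) = σ m)
    (hcompat : ∀ m : ℤ, (s m).comp (q m) = (ι m).comp (s (m - d1)))
    -- `Δ` is a projectively normal (complete intersection) subvariety of
    -- dimension ≥ 1: restriction to `Δ` is surjective in every degree
    (hΔ : ∀ m : ℤ, Function.Surjective (σ m)) :
    ∀ m : ℤ, 0 ≤ m → Function.Surjective (s m) := by
  have key : ∀ n : ℕ, Function.Surjective (s (n : ℤ)) := by
    intro n
    induction n using Nat.strong_induction_on with
    | _ n ih =>
      intro b
      obtain ⟨a, ha⟩ := hΔ n (ρ n b)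
      have hker : b - s n a ∈ LinearMap.ker (ρ n) := by
        have : ρ n (s n a) = σ n a := by
          rw [← hcomm n]; rfl
        simp [LinearMap.mem_ker, this, ha]
      obtain ⟨b', hb'⟩ := hexact n hker
      by_cases h : (n : ℤ) - d1 < 0
      · have hs := hneg _ h
        have hb0 : b' = 0 := Subsingleton.elim _ _
        refine ⟨a, ?_⟩
        have : b - s n a = 0 := by rw [← hb', hb0, map_zero]
        exact (sub_eq_zero.mp this).symm
      · push_neg at h
        set k := ((n : ℤ) - d1).toNat with hkdef
        have hk : (k : ℤ) = (n : ℤ) - d1 := Int.toNat_of_nonneg h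
        have hkn : k < n := by omega
        have hsurj : Function.Surjective (s ((n : ℤ) - d1)) := hk ▸ ih k hkn
        obtain ⟨a', ha'⟩ := hsurj b'
        refine ⟨a + q n a', ?_⟩
        have hc : s n (q n a') = ι n (s ((n : ℤ) - d1) a') := by
          have := hcompat n
          exact LinearMap.congr_fun this a'
        rw [map_add, hc, ha', hb']
        abel
  intro m hm
  obtain ⟨n, rfl⟩ := Int.eq_ofNat_of_zero_le hm
  exact key n
end
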